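/- Fix θ̄ ∈ Θ^strict, and consider the ordinal implementation problem (Θ̄, Ω, f) with Θ̄ = {θ̄} ∪ (Θ^una ∩ Θ^strict), Ω the set of all cardinal representations of all states in Θ̄, and f : Θ̄ → Z such that f(θ) is the agents' common top-ranked outcome for every θ ∈ Θ^una ∩ Θ^strict. If there exist two distinct agents i1, i2 ∈ I such that θ̄ ∈ Θ^{(i1,i2)-f(θ̄)}, then f can be UD^∞-implemented by some stochastic finite-action mechanism. -/
import Mathlib


open Function

noncomputable section

/-- A lottery (probability distribution) on the finite outcome set `Z`. -/
def Lottery (Z : Type) [Fintype Z] : Type :=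
  {y : Z → ℝ // (∀ z, 0 ≤ y z) ∧ ∑ z, y z = 1}

variable {Z : Type} [Fintype Z]

/-- The degenerate lottery on the outcome `z`. -/
def Lottery.delta [DecidableEq Z] (z : Z) : Lottery Z :=
  ⟨fun z' => if z' = z then 1 else 0, fun z' => by positivity, by simp⟩

/-- Expected utility of the lottery `y` under the vN-M utility function `u`. -/
def expUtil (u : Z → ℝ) (y : Lottery Z) : ℝ := ∑ z, y.1 z * u z

variable {I : Type} [DecidableEq I] {S : I → Type}

/-- `s_i` is strictly dominated (for agent `i`, at cardinal state `u`, in the mechanism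
with outcome function `g`) on the product set `×_j T j`. -/
def Dominated (u : I → Z → ℝ) (g : (∀ i, S i) → Lottery Z)
    (T : ∀ j, Set (S j)) (i : I) (si : S i) : Prop :=
  ∃ si' : S i, ∀ s : ∀ j, S j, (∀ j, j ≠ i → s j ∈ T j) →
    expUtil (u i) (g (update s i si)) < expUtil (u i) (g (update s i si'))

/-- `UDk u g k i` is the set of strategies of agent `i` surviving `k` rounds of iterative
deletion of strictly dominated strategies at the cardinal state `u` (`UDk u g 0 i = S i`). -/
def UDk (u : I → Z → ℝ) (g : (∀ i, S i) → Lottery Z) : ℕ → ∀ i, Set (S i)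
  | 0 => fun _ => Set.univ
  | (k + 1) => fun i => {si ∈ UDk u g k i | ¬ Dominated u g (UDk u g k) i si}

/-- `UD(M,u)`: profiles surviving one round of deletion. -/
def UDoneSet (u : I → Z → ℝ) (g : (∀ i, S i) → Lottery Z) : Set (∀ i, S i) :=
  {s | ∀ i, s i ∈ UDk u g 1 i}

/-- `UD^∞(M,u)`: profiles surviving iterative deletion (all rounds `k ≥ 1`). -/
def UDinfSet (u : I → Z → ℝ) (g : (∀ i, S i) → Lottery Z) : Set (∀ i, S i) :=
  {s | ∀ i, ∀ k : ℕ, s i ∈ UDk u g (k + 1) i}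

/-- `S_i^z`: strategies of agent `i` from which the degenerate outcome `z` is reachable. -/
def Sz [DecidableEq Z] (g : (∀ i, S i) → Lottery Z) (i : I) (z : Z) : Set (S i) :=
  {si | ∃ s : ∀ j, S j, s i = si ∧ g s = Lottery.delta z}

/-- `×_j T j` satisfies the non-domination property at `u`. -/
def NonDomProp (u : I → Z → ℝ) (g : (∀ i, S i) → Lottery Z) (T : ∀ j, Set (S j)) : Prop :=
  ∀ i, ∀ si ∈ T i, ∀ si' : S i, ∃ s : ∀ j, S j, (∀ j, j ≠ i → s j ∈ T j) ∧
    expUtil (u i) (g (update s i si')) ≤ expUtil (u i) (g (update s i si))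

/-- `u` is a cardinal representation of the ordinal state `θ`. -/
def Represents (u : I → Z → ℝ) (θ : I → Z → Z → Prop) : Prop :=
  ∀ i z z', θ i z z' ↔ u i z' ≤ u i z

/-- `Θ*`: all ordinal states (complete and transitive preference profiles). -/
def ThetaStar (I Z : Type) : Set (I → Z → Z → Prop) :=
  {θ | ∀ i, (∀ z z', θ i z z' ∨ θ i z' z) ∧ Transitive (θ i)}

/-- `Θ^una`: ordinal states where all agents have identical preferences. -/
def ThetaUna (I Z : Type) : Set (I → Z → Z → Prop) :=
  {θ ∈ ThetaStar I Z | ∀ i j z z', θ i z z' ↔ θ j z z'}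

/-- `Θ^strict`: ordinal states where no agent has non-trivial indifference. -/
def ThetaStrict (I Z : Type) : Set (I → Z → Z → Prop) :=
  {θ ∈ ThetaStar I Z | ∀ i z z', θ i z z' → θ i z' z → z = z'}

/-- The strict part `≻_i^θ`. -/
def StrictPref (θ : I → Z → Z → Prop) (i : I) (z z' : Z) : Prop := θ i z z' ∧ ¬ θ i z' z

/-- Agent `i` is a dictator for `f` on `Θ`. -/
def Dictator (Θ : Set (I → Z → Z → Prop)) (f : (I → Z → Z → Prop) → Z) (i : I) : Prop :=
  ∀ θ ∈ Θ, ∀ z, z ≠ f θ → StrictPref θ i (f θ) z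

/-- `(Θ, Ω)` form a cardinal implementation problem: `Θ` is a set of ordinal states, every
member of `Ω` is a cardinal representation of some `θ ∈ Θ`, and `Ω_θ ≠ ∅` for all `θ ∈ Θ`. -/
def CIProblem (Θ : Set (I → Z → Z → Prop)) (Ω : Set (I → Z → ℝ)) : Prop :=
  Θ ⊆ ThetaStar I Z ∧ (∀ u ∈ Ω, ∃ θ ∈ Θ, Represents u θ) ∧
    ∀ θ ∈ Θ, ∃ u ∈ Ω, Represents u θ

/-- `f` is UD-implemented by the mechanism with outcome function `g`. -/
def UDImplements [DecidableEq Z] (Θ : Set (I → Z → Z → Prop)) (Ω : Set (I → Z → ℝ))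
    (f : (I → Z → Z → Prop) → Z) (g : (∀ i, S i) → Lottery Z) : Prop :=
  ∀ θ ∈ Θ, ∀ u ∈ Ω, Represents u θ → g '' UDoneSet u g = {Lottery.delta (f θ)}

/-- `f` is UD^∞-implemented by the mechanism with outcome function `g`. -/
def UDinfImplements [DecidableEq Z] (Θ : Set (I → Z → Z → Prop)) (Ω : Set (I → Z → ℝ))
    (f : (I → Z → Z → Prop) → Z) (g : (∀ i, S i) → Lottery Z) : Prop :=
  ∀ θ ∈ Θ, ∀ u ∈ Ω, Represents u θ → g '' UDinfSet u g = {Lottery.delta (f θ)}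

/-- `Θ^{(i1,i2)-z}`: strict states where `z` is second-best for both `i1` and `i2`,
whose top-ranked outcomes differ. -/
def ThetaSecond [Fintype Z] (i1 i2 : I) (z : Z) : Set (I → Z → Z → Prop) :=
  {θ ∈ ThetaStrict I Z |
    Set.ncard {z' | θ i1 z z'} = Fintype.card Z - 1 ∧
    Set.ncard {z' | θ i2 z z'} = Fintype.card Z - 1 ∧
    {z' | θ i1 z z'} ≠ {z' | θ i2 z z'}}

end
noncomputable section XiongAux

open Function

variable {Z : Type} [Fintype Z] [DecidableEq Z]

/-- The half-half mixture of the degenerate lotteries on `x` and `y`. -/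
def mix (x y : Z) : Lottery Z :=
  ⟨fun z => (if z = x then (2:ℝ)⁻¹ else 0) + (if z = y then (2:ℝ)⁻¹ else 0),
   fun z => by positivity, by
     rw [Finset.sum_add_distrib]
     simp [Finset.sum_ite_eq']
     norm_num⟩

lemma mix_self (z : Z) : mix z z = Lottery.delta z := by
  apply Subtype.ext
  funext z'
  simp only [mix, Lottery.delta]
  split_ifs <;> norm_num

lemma expUtil_delta (w : Z → ℝ) (z : Z) : expUtil w (Lottery.delta z) = w z := by
  simp [expUtil, Lottery.delta, ite_mul, Finset.sum_ite_eq']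

lemma expUtil_mix (w : Z → ℝ) (x y : Z) : expUtil w (mix x y) = (w x + w y) / 2 := by
  simp only [expUtil, mix, add_mul, ite_mul, zero_mul]
  rw [Finset.sum_add_distrib]
  simp [Finset.sum_ite_eq']
  ring

/-- Abstract payoff function of the mechanism. -/
def Pfun (a b zs : Z) (w : Z → ℝ) (x y : Z) : ℝ :=
  if x = y then w x
  else (w (if x = a then zs else x) + w (if y = b then zs else y)) / 2

variable {a b zs t z1 z2 : Z} {w : Z → ℝ}

lemma Pfun_diag : Pfun a b zs w t t = w t := by unfold Pfun; rw [if_pos rfl]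

lemma Pfun_ab (hab : a ≠ b) : Pfun a b zs w a b = w zs := by
  unfold Pfun; rw [if_neg hab]; simp

lemma L1 (hza : zs ≠ a) (h1a : z1 ≠ a) (h1s : z1 ≠ zs) (h : w z1 < w zs) (y : Z) :
    Pfun a b zs w z1 y < Pfun a b zs w zs y := by
  unfold Pfun
  split_ifs <;> subst_eqs <;> first | linarith | simp_all

lemma L2 (hza : zs ≠ a) (hzb : zs ≠ b) (h2b : z2 ≠ b) (h2s : z2 ≠ zs) (h : w z2 < w zs) (x : Z) :
    Pfun a b zs w x z2 < Pfun a b zs w x zs := by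
  unfold Pfun
  split_ifs <;> subst_eqs <;> first | linarith | simp_all

lemma L3 (hab : a ≠ b) (hza : zs ≠ a) (h2a : z2 ≠ a) (h1 : w z2 < w a) (h2 : w zs < w a) (x : Z) :
    Pfun a b zs w x z2 < Pfun a b zs w x a := by
  unfold Pfun
  split_ifs <;> subst_eqs <;> first | linarith | simp_all

lemma L4 (hab : a ≠ b) (hza : zs ≠ a) (h1a : z1 ≠ a) (h1 : w z1 < w a) (h2 : w zs < w a) :
    Pfun a b zs w z1 a < Pfun a b zs w a a := by
  unfold Pfun
  split_ifs <;> subst_eqs <;> first | linarith | simp_all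

lemma L5 (hab : a ≠ b) (hzb : zs ≠ b) (h1b : z1 ≠ b) (h1 : w z1 < w b) (h2 : w zs < w b) (y : Z) :
    Pfun a b zs w z1 y < Pfun a b zs w b y := by
  unfold Pfun
  split_ifs <;> subst_eqs <;> first | linarith | simp_all

lemma L6 (hab : a ≠ b) (hzb : zs ≠ b) (h2b : z2 ≠ b) (h1 : w z2 < w b) (h2 : w zs < w b) :
    Pfun a b zs w b z2 < Pfun a b zs w b b := by
  unfold Pfun
  split_ifs <;> subst_eqs <;> first | linarith | simp_all

lemma L7 (hta : t ≠ a) (htb : t ≠ b) (hst : zs ≠ t) (h1t : z1 ≠ t) (h1b : z1 ≠ b)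
    (h1 : w z1 < w t) (h2 : w zs < w t) (y : Z) :
    Pfun a b zs w z1 y < Pfun a b zs w t y := by
  unfold Pfun
  split_ifs <;> subst_eqs <;> first | linarith | simp_all

lemma L8 (hta : t ≠ a) (htb : t ≠ b) (hst : zs ≠ t) (h2t : z2 ≠ t) (h2a : z2 ≠ a)
    (h1 : w z2 < w t) (h2 : w zs < w t) (x : Z) :
    Pfun a b zs w x z2 < Pfun a b zs w x t := by
  unfold Pfun
  split_ifs <;> subst_eqs <;> first | linarith | simp_all

lemma L9 (hta : t ≠ a) (htb : t ≠ b) (hab : a ≠ b) (hst : zs ≠ t) (hbt : b ≠ t)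
    (h1 : w b < w t) (h2 : w a < w t) (y : Z) (hy : y = t ∨ y = a) :
    Pfun a b zs w b y < Pfun a b zs w t y := by
  unfold Pfun
  rcases hy with rfl | rfl <;> split_ifs <;> subst_eqs <;> first | linarith | simp_all

lemma L10 (hta : t ≠ a) (htb : t ≠ b) (hab : a ≠ b) (hst : zs ≠ t) (hat : a ≠ t)
    (h1 : w b < w t) (h2 : w a < w t) (x : Z) (hx : x = t ∨ x = b) :
    Pfun a b zs w x a < Pfun a b zs w x t := by
  unfold Pfun
  rcases hx with rfl | rfl <;> split_ifs <;> subst_eqs <;> first | linarith | simp_all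

lemma N1 (hab : a ≠ b) (hw : ∀ z, z ≠ a → w z ≤ w zs) (x : Z) :
    Pfun a b zs w x b ≤ Pfun a b zs w a b := by
  rw [Pfun_ab hab]; unfold Pfun
  rcases eq_or_ne x b with h | hxb
  · rw [if_pos h, h]; exact hw b hab.symm
  · rw [if_neg hxb]
    have e : (if b = b then zs else b) = zs := if_pos rfl
    rw [e]
    have h2 : w (if x = a then zs else x) ≤ w zs := by
      split_ifs with h; exacts [le_refl _, hw x h]
    linarith

lemma N2 (hab : a ≠ b) (hw : ∀ z, z ≠ b → w z ≤ w zs) (y : Z) :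
    Pfun a b zs w a y ≤ Pfun a b zs w a b := by
  rw [Pfun_ab hab]; unfold Pfun
  rcases eq_or_ne a y with h | hay
  · rw [if_pos h]; exact hw a hab
  · rw [if_neg hay]
    have e : (if a = a then zs else a) = zs := if_pos rfl
    rw [e]
    have h2 : w (if y = b then zs else y) ≤ w zs := by
      split_ifs with h; exacts [le_refl _, hw y h]
    linarith

lemma N3 (hw : ∀ z, w z ≤ w t) (x : Z) :
    Pfun a b zs w x t ≤ Pfun a b zs w t t := by
  rw [Pfun_diag]; unfold Pfun
  rcases eq_or_ne x t with h | hxt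
  · rw [if_pos h, h]
  · rw [if_neg hxt]
    have h1 := hw (if x = a then zs else x)
    have h2 := hw (if t = b then zs else t)
    linarith

lemma N4 (hw : ∀ z, w z ≤ w t) (y : Z) :
    Pfun a b zs w t y ≤ Pfun a b zs w t t := by
  rw [Pfun_diag]; unfold Pfun
  rcases eq_or_ne t y with h | hty
  · rw [if_pos h]
  · rw [if_neg hty]
    have h1 := hw (if t = a then zs else t)
    have h2 := hw (if y = b then zs else y)
    linarith

lemma nash_mem_UDinfSet {I : Type} [DecidableEq I] {S : I → Type}
    {u : I → Z → ℝ} {g : (∀ i, S i) → Lottery Z} {sstar : ∀ i, S i}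
    (h : ∀ i x, expUtil (u i) (g (Function.update sstar i x)) ≤ expUtil (u i) (g sstar)) :
    sstar ∈ UDinfSet u g := by
  have key : ∀ k i, sstar i ∈ UDk u g k i := by
    intro k
    induction k with
    | zero => exact fun i => Set.mem_univ _
    | succ k ih =>
      intro i
      refine ⟨ih i, ?_⟩
      rintro ⟨x, hx⟩
      have h2 := hx sstar (fun j _ => ih j)
      rw [Function.update_eq_self] at h2
      exact absurd h2 (not_lt.mpr (h i x))
  exact fun i k => key (k + 1) i

variable {I : Type} [DecidableEq I]

/-- The mechanism: agents `i1` and `i2` each name an outcome (all other agents are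
ignored). On agreement, the named outcome results; otherwise the half-half mixture of the
two named outcomes, except that `i1`'s report `a` and `i2`'s report `b` are replaced by
`zs` in the mixture. -/
def gm (i1 i2 : I) (a b zs : Z) (s : I → Z) : Lottery Z :=
  if s i1 = s i2 then Lottery.delta (s i1)
  else mix (if s i1 = a then zs else s i1) (if s i2 = b then zs else s i2)

lemma expUtil_gm (i1 i2 : I) (a b zs : Z) (w : Z → ℝ) (s : I → Z) :
    expUtil w (gm i1 i2 a b zs s) = Pfun a b zs w (s i1) (s i2) := by
  unfold gm Pfun
  split_ifs <;> first | rw [expUtil_delta] | rw [expUtil_mix]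

end XiongAux

/-- **Theorem 4 (Xiong).** Fix `θ̄ ∈ Θ^strict` and consider the ordinal implementation
problem with `Θ = {θ̄} ∪ (Θ^una ∩ Θ^strict)`, all cardinal representations, and `f`
selecting the common top-ranked outcome on `Θ^una ∩ Θ^strict`. If there are distinct agents
`i1, i2` with `θ̄ ∈ Θ^{(i1,i2)-f(θ̄)}`, then `f` can be UD^∞-implemented by a stochastic
finite-action mechanism. -/
theorem UDinf_possibility_three_outcomes
    {I Z : Type} [Fintype I] [Fintype Z] [DecidableEq I] [DecidableEq Z]
    (hI : 2 ≤ Fintype.card I) (hZ : 3 ≤ Fintype.card Z)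
    (θbar : I → Z → Z → Prop) (hθbar : θbar ∈ ThetaStrict I Z)
    (f : (I → Z → Z → Prop) → Z)
    (hf : ∀ θ ∈ ThetaUna I Z ∩ ThetaStrict I Z, ∀ (i : I) (z : Z), θ i (f θ) z)
    (i1 i2 : I) (h12 : i1 ≠ i2)
    (hsec : θbar ∈ ThetaSecond i1 i2 (f θbar)) :
    ∃ (S : I → Type) (_ : ∀ i, Finite (S i)) (_ : ∀ i, Nonempty (S i))
      (g : (∀ i, S i) → Lottery Z),
      UDinfImplements (insert θbar (ThetaUna I Z ∩ ThetaStrict I Z))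
        {u | ∃ θ ∈ insert θbar (ThetaUna I Z ∩ ThetaStrict I Z), Represents u θ} f g := by
  classical
  obtain ⟨-, h1c, h2c, hne⟩ := hsec
  have h21 : i2 ≠ i1 := h12.symm
  have hcomp : ∀ (i : I) (z z' : Z), θbar i z z' ∨ θbar i z' z := fun i => (hθbar.1 i).1
  have hstrict : ∀ (i : I) (z z' : Z), θbar i z z' → θbar i z' z → z = z' := hθbar.2
  -- extract the top outcome `a` of agent `i1` at `θbar`
  have hcard1 : ({z' | θbar i1 (f θbar) z'}ᶜ).ncard = 1 := by
    have h := Set.ncard_add_ncard_compl {z' | θbar i1 (f θbar) z'}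
    rw [Nat.card_eq_fintype_card] at h
    omega
  obtain ⟨a, ha⟩ := Set.ncard_eq_one.mp hcard1
  have hmem1 : ∀ z, z ≠ a → θbar i1 (f θbar) z := by
    intro z hz
    by_contra hc
    have hzz : z ∈ ({z' | θbar i1 (f θbar) z'}ᶜ) := hc
    rw [ha] at hzz
    exact hz hzz
  have hnota : ¬ θbar i1 (f θbar) a := by
    have : a ∈ ({z' | θbar i1 (f θbar) z'}ᶜ) := by rw [ha]; rfl
    exact this
  have hza : f θbar ≠ a := by
    intro h
    exact hnota (h ▸ ((hcomp i1 (f θbar) (f θbar)).elim id id))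
  -- extract the top outcome `b` of agent `i2` at `θbar`
  have hcard2 : ({z' | θbar i2 (f θbar) z'}ᶜ).ncard = 1 := by
    have h := Set.ncard_add_ncard_compl {z' | θbar i2 (f θbar) z'}
    rw [Nat.card_eq_fintype_card] at h
    omega
  obtain ⟨b, hb⟩ := Set.ncard_eq_one.mp hcard2
  have hmem2 : ∀ z, z ≠ b → θbar i2 (f θbar) z := by
    intro z hz
    by_contra hc
    have hzz : z ∈ ({z' | θbar i2 (f θbar) z'}ᶜ) := hc
    rw [hb] at hzz
    exact hz hzz
  have hnotb : ¬ θbar i2 (f θbar) b := by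
    have : b ∈ ({z' | θbar i2 (f θbar) z'}ᶜ) := by rw [hb]; rfl
    exact this
  have hzb : f θbar ≠ b := by
    intro h
    exact hnotb (h ▸ ((hcomp i2 (f θbar) (f θbar)).elim id id))
  have hab : a ≠ b := by
    intro h
    apply hne
    rw [← compl_compl {z' | θbar i1 (f θbar) z'}, ha, h, ← hb, compl_compl]
  -- the mechanism
  have hZpos : 0 < Fintype.card Z := by omega
  refine ⟨fun _ => Z, fun _ => inferInstance, fun _ => Fintype.card_pos_iff.mp hZpos,
    gm i1 i2 a b (f θbar), ?_⟩
  intro θ hθ u _ hrep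
  rcases hθ with rfl | huna
  · -- case θ = θ
    have hw1le : ∀ z, z ≠ a → u i1 z ≤ u i1 (f θ) := fun z hz =>
      (hrep i1 (f θ) z).mp (hmem1 z hz)
    have hw1lt : ∀ z, z ≠ a → z ≠ f θ → u i1 z < u i1 (f θ) := by
      intro z hz hz'
      rcases (hw1le z hz).lt_or_eq with h | h
      · exact h
      · exfalso
        have h2 : θ i1 z (f θ) := (hrep i1 z (f θ)).mpr (le_of_eq h.symm)
        exact hz' (hstrict i1 z (f θ) h2 (hmem1 z hz))
    have hw2le : ∀ z, z ≠ b → u i2 z ≤ u i2 (f θ) := fun z hz =>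
      (hrep i2 (f θ) z).mp (hmem2 z hz)
    have hw2lt : ∀ z, z ≠ b → z ≠ f θ → u i2 z < u i2 (f θ) := by
      intro z hz hz'
      rcases (hw2le z hz).lt_or_eq with h | h
      · exact h
      · exfalso
        have h2 : θ i2 z (f θ) := (hrep i2 z (f θ)).mpr (le_of_eq h.symm)
        exact hz' (hstrict i2 z (f θ) h2 (hmem2 z hz))
    apply Set.eq_singleton_iff_unique_mem.mpr
    constructor
    · -- the Nash profile (a, b) survives and yields δ_{f θ}
      refine ⟨Function.update (fun _ => b) i1 a, ?_, ?_⟩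
      · apply nash_mem_UDinfSet
        intro i x
        rcases eq_or_ne i i1 with rfl | hi1
        · rw [expUtil_gm, expUtil_gm]
          simp only [Function.update_self, Function.update_of_ne h21]
          exact N1 hab hw1le x
        · rcases eq_or_ne i i2 with rfl | hi2
          · rw [expUtil_gm, expUtil_gm]
            simp only [Function.update_self, Function.update_of_ne h12, Function.update_of_ne h21]
            exact N2 hab hw2le x
          · rw [expUtil_gm, expUtil_gm]
            simp only [Function.update_of_ne (Ne.symm hi1), Function.update_of_ne (Ne.symm hi2)]
            exact le_refl _
      · show gm i1 i2 a b (f θ) _ = _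
        unfold gm
        simp only [Function.update_self, Function.update_of_ne h21]
        rw [if_neg hab]
        simp [mix_self]
    · rintro y ⟨s, hsmem, rfl⟩
      have key1 : s i1 = a ∨ s i1 = f θ := by
        by_contra hc
        push_neg at hc
        refine (hsmem i1 0).2 ⟨f θ, fun sp hsp => ?_⟩
        rw [expUtil_gm, expUtil_gm]
        simp only [Function.update_self, Function.update_of_ne h21]
        exact L1 hza hc.1 hc.2 (hw1lt _ hc.1 hc.2) (sp i2)
      have key2 : s i2 = b ∨ s i2 = f θ := by
        by_contra hc
        push_neg at hc
        refine (hsmem i2 0).2 ⟨f θ, fun sp hsp => ?_⟩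
        rw [expUtil_gm, expUtil_gm]
        simp only [Function.update_self, Function.update_of_ne h12]
        exact L2 hza hzb hc.1 hc.2 (hw2lt _ hc.1 hc.2) (sp i1)
      show gm i1 i2 a b (f θ) s = _
      unfold gm
      rcases key1 with h1 | h1 <;> rcases key2 with h2 | h2 <;> rw [h1, h2]
      · rw [if_neg hab, if_pos rfl, if_pos rfl, mix_self]
      · rw [if_neg (Ne.symm hza), if_pos rfl, if_neg hzb, mix_self]
      · rw [if_neg hzb, if_neg hza, if_pos rfl, mix_self]
      · rw [if_pos rfl]
  · -- case θ unanimous and strict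
    have htle : ∀ (i : I) (z : Z), u i z ≤ u i (f θ) := fun i z =>
      (hrep i (f θ) z).mp (hf θ huna i z)
    have htlt : ∀ (i : I) (z : Z), z ≠ f θ → u i z < u i (f θ) := by
      intro i z hz
      rcases (htle i z).lt_or_eq with h | h
      · exact h
      · exfalso
        have h2 : θ i z (f θ) := (hrep i z (f θ)).mpr (le_of_eq h.symm)
        exact hz (huna.2.2 i (f θ) z (hf θ huna i z) h2).symm
    apply Set.eq_singleton_iff_unique_mem.mpr
    constructor
    · -- the Nash profile (t, t, ..., t) survives and yields δ_{f θ}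
      refine ⟨fun _ => f θ, ?_, ?_⟩
      · apply nash_mem_UDinfSet
        intro i x
        rcases eq_or_ne i i1 with rfl | hi1
        · rw [expUtil_gm, expUtil_gm]
          simp only [Function.update_self, Function.update_of_ne h21]
          exact N3 (htle i) x
        · rcases eq_or_ne i i2 with rfl | hi2
          · rw [expUtil_gm, expUtil_gm]
            simp only [Function.update_self, Function.update_of_ne h12]
            exact N4 (htle i) x
          · rw [expUtil_gm, expUtil_gm]
            simp only [Function.update_of_ne (Ne.symm hi1), Function.update_of_ne (Ne.symm hi2)]
            exact le_refl _
      · show gm i1 i2 a b (f θbar) _ = _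
        unfold gm
        rw [if_pos rfl]
    · rintro y ⟨s, hsmem, rfl⟩
      show gm i1 i2 a b (f θbar) s = Lottery.delta (f θ)
      by_cases hta : f θ = a
      · -- common top is a
        have step1 : ∀ y', y' ∈ UDk u (gm i1 i2 a b (f θbar)) 1 i2 → y' = a := by
          intro y' hy'
          by_contra hc
          refine hy'.2 ⟨a, fun sp hsp => ?_⟩
          rw [expUtil_gm, expUtil_gm]
          simp only [Function.update_self, Function.update_of_ne h12]
          exact L3 hab hza hc (hta ▸ htlt i2 y' (fun h => hc (h.trans hta)))
            (hta ▸ htlt i2 (f θbar) (fun h => hza (h.trans hta))) (sp i1)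
        have step2 : s i1 = a := by
          rcases eq_or_ne (s i1) a with h | hc
          · exact h
          exfalso
          refine (hsmem i1 1).2 ⟨a, fun sp hsp => ?_⟩
          rw [expUtil_gm, expUtil_gm]
          simp only [Function.update_self, Function.update_of_ne h21]
          rw [step1 (sp i2) (hsp i2 h21)]
          exact L4 hab hza hc (hta ▸ htlt i1 (s i1) (fun h => hc (h.trans hta)))
            (hta ▸ htlt i1 (f θbar) (fun h => hza (h.trans hta)))
        have step3 : s i2 = a := step1 (s i2) (hsmem i2 0)
        unfold gm
        rw [step2, step3, if_pos rfl, hta]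
      · by_cases htb : f θ = b
        · -- common top is b
          have step1 : ∀ x', x' ∈ UDk u (gm i1 i2 a b (f θbar)) 1 i1 → x' = b := by
            intro x' hx'
            by_contra hc
            refine hx'.2 ⟨b, fun sp hsp => ?_⟩
            rw [expUtil_gm, expUtil_gm]
            simp only [Function.update_self, Function.update_of_ne h21]
            exact L5 hab hzb hc (htb ▸ htlt i1 x' (fun h => hc (h.trans htb)))
              (htb ▸ htlt i1 (f θbar) (fun h => hzb (h.trans htb))) (sp i2)
          have step2 : s i2 = b := by
            rcases eq_or_ne (s i2) b with h | hc
            · exact h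
            exfalso
            refine (hsmem i2 1).2 ⟨b, fun sp hsp => ?_⟩
            rw [expUtil_gm, expUtil_gm]
            simp only [Function.update_self, Function.update_of_ne h12]
            rw [step1 (sp i1) (hsp i1 h12)]
            exact L6 hab hzb hc (htb ▸ htlt i2 (s i2) (fun h => hc (h.trans htb)))
              (htb ▸ htlt i2 (f θbar) (fun h => hzb (h.trans htb)))
          have step3 : s i1 = b := step1 (s i1) (hsmem i1 0)
          unfold gm
          rw [step2, step3, if_pos rfl, htb]
        · by_cases hts : f θ = f θbar
          · -- common top is f θbar
            have key1 : s i1 = a ∨ s i1 = f θbar := by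
              by_contra hc
              push_neg at hc
              refine (hsmem i1 0).2 ⟨f θbar, fun sp hsp => ?_⟩
              rw [expUtil_gm, expUtil_gm]
              simp only [Function.update_self, Function.update_of_ne h21]
              exact L1 hza hc.1 hc.2 (hts ▸ htlt i1 (s i1) (fun h => hc.2 (h.trans hts)))
                (sp i2)
            have key2 : s i2 = b ∨ s i2 = f θbar := by
              by_contra hc
              push_neg at hc
              refine (hsmem i2 0).2 ⟨f θbar, fun sp hsp => ?_⟩
              rw [expUtil_gm, expUtil_gm]
              simp only [Function.update_self, Function.update_of_ne h12]
              exact L2 hza hzb hc.1 hc.2 (hts ▸ htlt i2 (s i2) (fun h => hc.2 (h.trans hts)))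
                (sp i1)
            unfold gm
            rw [hts]
            rcases key1 with h1 | h1 <;> rcases key2 with h2 | h2 <;> rw [h1, h2]
            · rw [if_neg hab, if_pos rfl, if_pos rfl, mix_self]
            · rw [if_neg (Ne.symm hza), if_pos rfl, if_neg hzb, mix_self]
            · rw [if_neg hzb, if_neg hza, if_pos rfl, mix_self]
            · rw [if_pos rfl]
          · -- common top t distinct from a, b, f θbar
            have hat : a ≠ f θ := fun h => hta h.symm
            have hbt : b ≠ f θ := fun h => htb h.symm
            have hst : f θbar ≠ f θ := fun h => hts h.symm
            have step1a : ∀ x', x' ∈ UDk u (gm i1 i2 a b (f θbar)) 1 i1 →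
                x' = f θ ∨ x' = b := by
              intro x' hx'
              by_contra hc
              push_neg at hc
              refine hx'.2 ⟨f θ, fun sp hsp => ?_⟩
              rw [expUtil_gm, expUtil_gm]
              simp only [Function.update_self, Function.update_of_ne h21]
              exact L7 hta htb hst hc.1 hc.2 (htlt i1 x' hc.1) (htlt i1 (f θbar) hst)
                (sp i2)
            have step1b : ∀ y', y' ∈ UDk u (gm i1 i2 a b (f θbar)) 1 i2 →
                y' = f θ ∨ y' = a := by
              intro y' hy'
              by_contra hc
              push_neg at hc
              refine hy'.2 ⟨f θ, fun sp hsp => ?_⟩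
              rw [expUtil_gm, expUtil_gm]
              simp only [Function.update_self, Function.update_of_ne h12]
              exact L8 hta htb hst hc.1 hc.2 (htlt i2 y' hc.1) (htlt i2 (f θbar) hst)
                (sp i1)
            have step2a : s i1 = f θ := by
              rcases step1a (s i1) (hsmem i1 0) with h | h
              · exact h
              exfalso
              refine (hsmem i1 1).2 ⟨f θ, fun sp hsp => ?_⟩
              rw [expUtil_gm, expUtil_gm]
              simp only [Function.update_self, Function.update_of_ne h21]
              rw [h]
              exact L9 hta htb hab hst hbt (htlt i1 b hbt) (htlt i1 a hat) (sp i2)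
                (step1b (sp i2) (hsp i2 h21))
            have step2b : s i2 = f θ := by
              rcases step1b (s i2) (hsmem i2 0) with h | h
              · exact h
              exfalso
              refine (hsmem i2 1).2 ⟨f θ, fun sp hsp => ?_⟩
              rw [expUtil_gm, expUtil_gm]
              simp only [Function.update_self, Function.update_of_ne h12]
              rw [h]
              exact L10 hta htb hab hst hat (htlt i2 b hbt) (htlt i2 a hat) (sp i1)
                (step1a (sp i1) (hsp i1 h12))
            unfold gm
            rw [step2a, step2b, if_pos rfl]
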